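/- arXiv:1111.5933 — 3 statements merged into one kernel-verified Lean document; each statement's English description precedes it below -/
import Mathlib

section
/- Let μ : ℝ^m → [-∞, ∞) be concave with bounded domain, s₀ = sup μ attained at x₀, and let C > max(diam(dom μ), ε) for some ε > 0. Then for any s < s₀ and any s' with s - ε(s₀ - s)/(C - ε) ≤ s' < s, the level set X_{s'} := {x : μ(x) ≥ s'} is contained in the ε-neighborhood of X_s := {x : μ(x) ≥ s}. -/
/-!
Given `x` with `μ x ≥ s'`, move from `x` towards the maximiser `x₀` by the fraction
`t = (s - s') / (s₀ - s')`. Concavity gives `μ ≥ (1 - t) s' + t s₀ = s` at the new point, which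
lies at distance `t ‖x - x₀‖ < t C` from `x`; the lower bound on `s'` is exactly `t C ≤ ε`.
-/

open AffineMap

def ConcaveEReal {E : Type*} [AddCommGroup E] [Module ℝ E] (μ : E → EReal) : Prop :=
  ∀ x y : E, ∀ t : ℝ, 0 ≤ t → t ≤ 1 →
    ((1 - t : ℝ) : EReal) * μ x + (t : EReal) * μ y ≤ μ ((1 - t) • x + t • y)

theorem ConcaveEReal.coe_le_lineMap {E : Type*} [AddCommGroup E] [Module ℝ E]
    {μ : E → EReal} (hμ : ConcaveEReal μ) {x y : E} {a b t : ℝ}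
    (hx : (a : EReal) ≤ μ x) (hy : (b : EReal) ≤ μ y) (ht₀ : 0 ≤ t) (ht₁ : t ≤ 1) :
    (((1 - t) * a + t * b : ℝ) : EReal) ≤ μ (lineMap x y t) := by
  rw [lineMap_apply_module]
  calc (((1 - t) * a + t * b : ℝ) : EReal)
    _ = ((1 - t : ℝ) : EReal) * a + (t : EReal) * b := by
      rw [EReal.coe_add, EReal.coe_mul, EReal.coe_mul]
    _ ≤ ((1 - t : ℝ) : EReal) * μ x + (t : EReal) * μ y := by gcongr
    _ ≤ μ ((1 - t) • x + t • y) := hμ x y t ht₀ ht₁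

theorem interpolation_weight_mul_lt {s₀ s s' ε C d : ℝ} (hs : s < s₀) (hs' : s' < s)
    (hC : ε < C) (hd : d < C) (h : s - ε * (s₀ - s) / (C - ε) ≤ s') :
    (s - s') / (s₀ - s') * d < ε := by
  have hCε : 0 < C - ε := sub_pos.2 hC
  have hgap : (s - s') * (C - ε) ≤ ε * (s₀ - s) := by
    rw [← le_div_iff₀ hCε]; linarith
  rw [div_mul_eq_mul_div, div_lt_iff₀ (by linarith)]
  nlinarith

theorem ConcaveEReal.exists_superlevel_near {E : Type*} [SeminormedAddCommGroup E]
    [NormedSpace ℝ E] {μ : E → EReal} (hμ : ConcaveEReal μ) {x x₀ : E} {s₀ s s' ε C : ℝ}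
    (hx₀ : (s₀ : EReal) ≤ μ x₀) (hx : (s' : EReal) ≤ μ x) (hdist : dist x x₀ < C)
    (hs : s < s₀) (hs' : s' < s) (hC : ε < C) (h : s - ε * (s₀ - s) / (C - ε) ≤ s') :
    ∃ a, (s : EReal) ≤ μ a ∧ ‖x - a‖ < ε := by
  set t := (s - s') / (s₀ - s')
  have hpos : 0 < s₀ - s' := by linarith
  have ht₀ : 0 < t := div_pos (by linarith) hpos
  have ht₁ : t ≤ 1 := (div_le_one hpos).2 (by linarith)
  refine ⟨lineMap x x₀ t, ?_, ?_⟩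
  · have hcombo : (1 - t) * s' + t * s₀ = s := by
      simp only [t]
      field_simp
      ring
    simpa only [hcombo] using hμ.coe_le_lineMap hx hx₀ ht₀.le ht₁
  · rw [← dist_eq_norm, dist_left_lineMap, Real.norm_of_nonneg ht₀.le]
    exact interpolation_weight_mul_lt hs hs' hC hdist h

theorem stmt_2_general (m : ℕ) (μ : EuclideanSpace ℝ (Fin m) → EReal)
    (h_conc : ∀ x y : EuclideanSpace ℝ (Fin m), ∀ t : ℝ, 0 ≤ t → t ≤ 1 →
      ((1 - t : ℝ) : EReal) * μ x + (t : EReal) * μ y ≤ μ ((1 - t) • x + t • y))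
    (h_bdd_dom : Bornology.IsBounded {x | ⊥ < μ x})
    (s₀ : ℝ) (x₀ : EuclideanSpace ℝ (Fin m))
    (h_max : μ x₀ = (s₀ : EReal))
    (ε C : ℝ)
    (hC_diam : Metric.diam {x | ⊥ < μ x} < C) (hC_eps : ε < C) :
    ∀ s : ℝ, s < s₀ → ∀ s' : ℝ, s - ε * (s₀ - s) / (C - ε) ≤ s' → s' < s →
      {x | (s' : EReal) ≤ μ x} ⊆
        {y | ∃ a, (s : EReal) ≤ μ a ∧ ‖y - a‖ < ε} := by
  intro s hs s' hs'_lower hs'_upper x hx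
  have hx_dom : ⊥ < μ x := (EReal.bot_lt_coe s').trans_le hx
  have hx₀_dom : ⊥ < μ x₀ := h_max ▸ EReal.bot_lt_coe s₀
  have hdist : dist x x₀ < C :=
    (Metric.dist_le_diam_of_mem h_bdd_dom hx_dom hx₀_dom).trans_lt hC_diam
  exact ConcaveEReal.exists_superlevel_near h_conc h_max.ge hx hdist hs hs'_upper hC_eps
    hs'_lower

/-- For a concave `μ` with bounded domain whose supremum `s₀` is attained at `x₀`,
and `C > max (diam (dom μ)) ε`, for any `s < s₀` and `s'` with
`s - ε(s₀-s)/(C-ε) ≤ s' < s`, one has `X_{s'} ⊆ B_ε(X_s)`. -/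
theorem stmt_2 (m : ℕ) (μ : EuclideanSpace ℝ (Fin m) → EReal)
    (h_lt_top : ∀ x, μ x < ⊤)
    (h_conc : ∀ x y : EuclideanSpace ℝ (Fin m), ∀ t : ℝ, 0 ≤ t → t ≤ 1 →
      ((1 - t : ℝ) : EReal) * μ x + (t : EReal) * μ y ≤ μ ((1 - t) • x + t • y))
    (h_bdd_dom : Bornology.IsBounded {x | ⊥ < μ x})
    (s₀ : ℝ) (x₀ : EuclideanSpace ℝ (Fin m))
    (h_max : μ x₀ = (s₀ : EReal))
    (h_sup : ∀ x, μ x ≤ (s₀ : EReal))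
    (ε C : ℝ) (hε : 0 < ε)
    (hC_diam : Metric.diam {x | ⊥ < μ x} < C) (hC_eps : ε < C) :
    ∀ s : ℝ, s < s₀ → ∀ s' : ℝ, s - ε * (s₀ - s) / (C - ε) ≤ s' → s' < s →
      {x | (s' : EReal) ≤ μ x} ⊆
        {y | ∃ a, (s : EReal) ≤ μ a ∧ ‖y - a‖ < ε} :=
  stmt_2_general m μ h_conc h_bdd_dom s₀ x₀ h_max ε C hC_diam hC_eps
end

section
/- Let μ : ℝ^m → [-∞, ∞) be concave, upper semi-continuous, with values in [0, log d] on its domain, and with compact nonempty domain. Then for every ε > 0 there is a finite decreasing sequence s₀ > s₁ > ⋯ > s_n of real numbers with s_n < 0, s₀ = sup μ, X_{s_k} ⊆ B_ε(X_{s_{k-1}}) for k = 1, …, n, and dom μ = X₀ = X_{s_n}, where X_s := {x : μ(x) ≥ s}. -/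
/-!
The supremum `S` of `μ` is attained at some `z`. Near the top, compactness and upper
semicontinuity give `η > 0` with `X_{S-η} ⊆ B_ε(X_S)`. Below that, concavity does the work:
for `x ∈ X_s` the point `(1 - t) x + t z` lies in `X_{(1-t)s+tS}` at distance
`t‖x - z‖ ≤ t diam(dom μ)`, which is `< ε` for small `t`. The gaps `S - s_k` therefore grow
geometrically with ratio `(1 - t)⁻¹`, so finitely many steps reach a negative level, and every
negative level cuts out all of `dom μ` because `μ ≥ 0` there.
-/

open Metric Set

def ERealConcave {E : Type*} [AddCommGroup E] [Module ℝ E] (μ : E → EReal) : Prop :=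
  ∀ x y : E, ∀ t : ℝ, 0 ≤ t → t ≤ 1 →
    ((1 - t : ℝ) : EReal) * μ x + (t : EReal) * μ y ≤ μ ((1 - t) • x + t • y)

section Semicontinuity

variable {α : Type*} [TopologicalSpace α]

theorem UpperSemicontinuous.exists_forall_le_of_isCompact_setOf_bot_lt {β : Type*}
    [LinearOrder β] [OrderBot β] {f : α → β} (hf : UpperSemicontinuous f)
    (hc : IsCompact {x | ⊥ < f x}) (hne : {x | ⊥ < f x}.Nonempty) :
    ∃ z, ⊥ < f z ∧ ∀ y, f y ≤ f z := by
  obtain ⟨z, hz, hmax⟩ := (hf.upperSemicontinuousOn _).exists_isMaxOn hne hc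
  refine ⟨z, hz, fun y => ?_⟩
  rcases eq_bot_or_bot_lt (f y) with hy | hy
  · exact hy ▸ bot_le
  · exact hmax hy

theorem UpperSemicontinuous.exists_pos_setOf_sub_le_subset {f : α → EReal}
    (hf : UpperSemicontinuous f) (hc : IsCompact {x | ⊥ < f x}) {U : Set α} (hU : IsOpen U)
    {S : ℝ} (hSU : {x | (S : EReal) ≤ f x} ⊆ U) :
    ∃ η > 0, {x | ((S - η : ℝ) : EReal) ≤ f x} ⊆ U := by
  set K := {x | ((S - 1 : ℝ) : EReal) ≤ f x} \ U
  have hK : IsCompact K := hc.of_isClosed_subset ((hf.isClosed_preimage _).sdiff hU)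
    fun x hx => (EReal.bot_lt_coe _).trans_le hx.1
  rcases K.eq_empty_or_nonempty with hK_empty | hK_ne
  · refine ⟨1, one_pos, fun x hx => ?_⟩
    by_contra hxU
    exact (Set.eq_empty_iff_forall_notMem.1 hK_empty) x ⟨hx, hxU⟩
  obtain ⟨x₀, ⟨-, hx₀U⟩, hmax⟩ := (hf.upperSemicontinuousOn _).exists_isMaxOn hK_ne hK
  obtain ⟨r, hx₀r, hrS⟩ := EReal.lt_iff_exists_real_btwn.1
    (lt_of_not_ge fun h => hx₀U (hSU h))
  have hrS : r < S := EReal.coe_lt_coe_iff.1 hrS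
  refine ⟨min 1 (S - r), lt_min one_pos (sub_pos.2 hrS), fun x hx => ?_⟩
  by_contra hxU
  have hxK : x ∈ K :=
    ⟨(EReal.coe_le_coe_iff.2 (by linarith [min_le_left 1 (S - r)])).trans hx, hxU⟩
  have : ((S - min 1 (S - r) : ℝ) : EReal) < r := hx.trans_lt ((hmax hxK).trans_lt hx₀r)
  linarith [EReal.coe_lt_coe_iff.1 this, min_le_right 1 (S - r)]

end Semicontinuity

theorem ERealConcave.le_apply_combo {E : Type*} [AddCommGroup E] [Module ℝ E] {μ : E → EReal}
    (hμ : ERealConcave μ) {x z : E} {s S t : ℝ}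
    (ht0 : 0 ≤ t) (ht1 : t ≤ 1) (hx : (s : EReal) ≤ μ x) (hz : (S : EReal) ≤ μ z) :
    (((1 - t) * s + t * S : ℝ) : EReal) ≤ μ ((1 - t) • x + t • z) := by
  refine le_trans ?_ (hμ x z t ht0 ht1)
  rw [EReal.coe_add, EReal.coe_mul, EReal.coe_mul]
  exact add_le_add (mul_le_mul_of_nonneg_left hx (EReal.coe_nonneg.2 (by linarith)))
    (mul_le_mul_of_nonneg_left hz (EReal.coe_nonneg.2 ht0))

theorem ERealConcave.exists_setOf_le_subset_thickening {E : Type*} [NormedAddCommGroup E]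
    [NormedSpace ℝ E] {μ : E → EReal} (hμ : ERealConcave μ)
    (hb : Bornology.IsBounded {x | ⊥ < μ x}) {z : E} {S : ℝ} (hz : (S : EReal) ≤ μ z)
    {ε : ℝ} (hε : 0 < ε) :
    ∃ t, 0 < t ∧ t < 1 ∧ ∀ s : ℝ,
      {x | (s : EReal) ≤ μ x} ⊆
        thickening ε {x | (((1 - t) * s + t * S : ℝ) : EReal) ≤ μ x} := by
  set D := diam {x | ⊥ < μ x}
  obtain ⟨t₀, ht₀, ht₀D⟩ := exists_pos_mul_lt hε D
  set t := min t₀ (1 / 2)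
  have ht0 : 0 < t := lt_min ht₀ one_half_pos
  have ht1 : t < 1 := (min_le_right _ _).trans_lt one_half_lt_one
  have htD : t * D < ε :=
    (mul_le_mul_of_nonneg_right (min_le_left _ _) diam_nonneg).trans_lt (by linarith)
  refine ⟨t, ht0, ht1, fun s x hx => mem_thickening_iff.2 ⟨(1 - t) • x + t • z, ?_, ?_⟩⟩
  · exact hμ.le_apply_combo ht0.le ht1.le hx hz
  · have hxz : dist x z ≤ D := dist_le_diam_of_mem hb ((EReal.bot_lt_coe _).trans_le hx)
      ((EReal.bot_lt_coe _).trans_le hz)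
    have : x - ((1 - t) • x + t • z) = t • (x - z) := by module
    rw [dist_eq_norm, this, norm_smul, Real.norm_of_nonneg ht0.le, ← dist_eq_norm]
    exact (mul_le_mul_of_nonneg_left hxz ht0.le).trans_lt htD

def geometricLevels (S η c : ℝ) : ℕ → ℝ
  | 0 => S
  | k + 1 => S - η * c ^ k

theorem exists_strictAnti_levels (S : ℝ) {η t : ℝ} (hη : 0 < η) (ht0 : 0 < t) (ht1 : t < 1) :
    ∃ s : ℕ → ℝ, StrictAnti s ∧ s 0 = S ∧ s 1 = S - η ∧
      (∀ k, 1 ≤ k → s k = (1 - t) * s (k + 1) + t * S) ∧ ∀ L, ∃ n, s n < L := by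
  obtain ⟨c, hc1, hct⟩ : ∃ c : ℝ, 1 < c ∧ (1 - t) * c = 1 :=
    ⟨(1 - t)⁻¹, (one_lt_inv₀ (by linarith)).2 (by linarith),
      mul_inv_cancel₀ (by linarith)⟩
  refine ⟨geometricLevels S η c, strictAnti_nat_of_succ_lt fun k => ?_, rfl,
    by simp [geometricLevels], fun k hk => ?_, fun L => ?_⟩
  · cases k with
    | zero => simp [geometricLevels, hη]
    | succ k =>
      simp only [geometricLevels]
      linarith [mul_lt_mul_of_pos_left (pow_lt_pow_right₀ hc1 (Nat.lt_add_one k)) hη]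
  · obtain ⟨j, rfl⟩ : ∃ j, k = j + 1 := ⟨k - 1, by omega⟩
    simp only [geometricLevels]
    linear_combination (η * c ^ j) * hct
  · obtain ⟨N, hN⟩ := pow_unbounded_of_one_lt ((S - L) / η) hc1
    refine ⟨N + 1, ?_⟩
    simp only [geometricLevels]
    rw [div_lt_iff₀ hη] at hN
    linarith

theorem stmt_3_general (m d : ℕ) (μ : EuclideanSpace ℝ (Fin m) → EReal)
    (h_conc : ∀ x y : EuclideanSpace ℝ (Fin m), ∀ t : ℝ, 0 ≤ t → t ≤ 1 →
      ((1 - t : ℝ) : EReal) * μ x + (t : EReal) * μ y ≤ μ ((1 - t) • x + t • y))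
    (h_usc : UpperSemicontinuous μ)
    (h_range : ∀ x, ⊥ < μ x → (0 : EReal) ≤ μ x ∧ μ x ≤ (Real.log d : EReal))
    (h_compact : IsCompact {x | ⊥ < μ x})
    (h_ne : {x | ⊥ < μ x}.Nonempty) :
    ∀ ε > (0 : ℝ), ∃ (n : ℕ) (s : ℕ → ℝ),
      (∀ k < n, s (k + 1) < s k) ∧
      s n < 0 ∧
      (s 0 : EReal) = ⨆ x, μ x ∧
      (∀ k, 1 ≤ k → k ≤ n →
        {x | (s k : EReal) ≤ μ x} ⊆
          {y | ∃ a, (s (k - 1) : EReal) ≤ μ a ∧ ‖y - a‖ < ε}) ∧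
      {x | ⊥ < μ x} = {x | (0 : EReal) ≤ μ x} ∧
      {x | ⊥ < μ x} = {x | (s n : EReal) ≤ μ x} := by
  intro ε hε
  obtain ⟨z, hz_dom, hz_max⟩ :=
    h_usc.exists_forall_le_of_isCompact_setOf_bot_lt h_compact h_ne
  obtain ⟨S, hS⟩ : ∃ S : ℝ, μ z = S := ⟨(μ z).toReal, (EReal.coe_toReal
    (ne_top_of_le_ne_top (EReal.coe_ne_top _) (h_range z hz_dom).2) hz_dom.ne').symm⟩
  obtain ⟨η, hη, h_top_step⟩ := h_usc.exists_pos_setOf_sub_le_subset h_compact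
    isOpen_thickening (self_subset_thickening hε {x | (S : EReal) ≤ μ x})
  obtain ⟨t, ht0, ht1, h_step⟩ :=
    ERealConcave.exists_setOf_le_subset_thickening h_conc h_compact.isBounded hS.ge hε
  obtain ⟨s, hs_anti, hs0, hs1, hs_rec, hs_unbdd⟩ := exists_strictAnti_levels S hη ht0 ht1
  obtain ⟨n, hn⟩ := hs_unbdd 0
  have h_dom : ∀ r : EReal, ⊥ < r → r ≤ 0 → {x | ⊥ < μ x} = {x | r ≤ μ x} :=
    fun r hr hr0 => Set.ext fun x => ⟨fun hx => hr0.trans (h_range x hx).1, hr.trans_le⟩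
  refine ⟨n, s, fun k _ => hs_anti k.lt_succ_self, hn, ?_, fun k hk1 _ x hx => ?_,
    h_dom 0 EReal.bot_lt_zero le_rfl,
    h_dom (s n) (EReal.bot_lt_coe _) (EReal.coe_nonpos.2 hn.le)⟩
  · rw [hs0, ← hS]
    exact le_antisymm (le_iSup μ z) (iSup_le hz_max)
  obtain ⟨a, ha, hxa⟩ : ∃ a ∈ {a | (s (k - 1) : EReal) ≤ μ a}, dist x a < ε := by
    rw [← mem_thickening_iff]
    obtain rfl | ⟨j, hj, rfl⟩ : k = 1 ∨ ∃ j, 1 ≤ j ∧ k = j + 1 :=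
      (eq_or_lt_of_le hk1).imp Eq.symm fun h => ⟨k - 1, by omega, by omega⟩
    · rw [hs0]
      exact h_top_step (hs1 ▸ hx)
    · rw [Nat.add_sub_cancel, hs_rec j hj]
      exact h_step _ hx
  exact ⟨a, ha, dist_eq_norm x a ▸ hxa⟩

/-- For concave, upper semi-continuous `μ` with values in `[0, log d]` on its
compact nonempty domain, for every `ε > 0` there is a finite strictly decreasing sequence
`s₀ > s₁ > ⋯ > s_n` with `s_n < 0`, `s₀ = sup μ`, `X_{s_k} ⊆ B_ε(X_{s_{k-1}})`, and
`dom μ = X₀ = X_{s_n}`. -/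
theorem stmt_3 (m d : ℕ) (hd : 1 ≤ d) (μ : EuclideanSpace ℝ (Fin m) → EReal)
    (h_conc : ∀ x y : EuclideanSpace ℝ (Fin m), ∀ t : ℝ, 0 ≤ t → t ≤ 1 →
      ((1 - t : ℝ) : EReal) * μ x + (t : EReal) * μ y ≤ μ ((1 - t) • x + t • y))
    (h_usc : UpperSemicontinuous μ)
    (h_range : ∀ x, ⊥ < μ x → (0 : EReal) ≤ μ x ∧ μ x ≤ (Real.log d : EReal))
    (h_lt_top : ∀ x, μ x < ⊤)
    (h_compact : IsCompact {x | ⊥ < μ x})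
    (h_ne : {x | ⊥ < μ x}.Nonempty) :
    ∀ ε > (0 : ℝ), ∃ (n : ℕ) (s : ℕ → ℝ),
      (∀ k < n, s (k + 1) < s k) ∧
      s n < 0 ∧
      (s 0 : EReal) = ⨆ x, μ x ∧
      (∀ k, 1 ≤ k → k ≤ n →
        {x | (s k : EReal) ≤ μ x} ⊆
          {y | ∃ a, (s (k - 1) : EReal) ≤ μ a ∧ ‖y - a‖ < ε}) ∧
      {x | ⊥ < μ x} = {x | (0 : EReal) ≤ μ x} ∧
      {x | ⊥ < μ x} = {x | (s n : EReal) ≤ μ x} :=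
  stmt_3_general m d μ h_conc h_usc h_range h_compact h_ne
end

section
/- Let A₁, …, A_m be self-adjoint d×d complex matrices and define p : ℝ^m → ℝ by p(α) = log Tr exp(∑_{i=1}^m α_i A_i). Then p is a convex function on ℝ^m. -/
/-!
Diagonalize `K = a N + b N'` (with `a + b = 1`) by a unitary `W`, and let `x`, `y` be the diagonals
of `W* N W` and `W* N' W`; the eigenvalues of `K` are then `a x + b y`. Hence
`log Tr exp K = log ∑ exp (a x + b y) ≤ a log ∑ exp x + b log ∑ exp y` by convexity of log-sum-exp
(Hölder), and `∑ exp x ≤ Tr exp N` by the Peierls–Bogoliubov inequality. Composing with the linear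
map `α ↦ ∑ αᵢ Aᵢ` gives the theorem.
-/

open Matrix

theorem Real.sum_exp_mul_add_mul_le_rpow_mul_rpow {ι : Type*} (s : Finset ι) (x y : ι → ℝ)
    {a b : ℝ} (ha : 0 ≤ a) (hb : 0 ≤ b) (hab : a + b = 1) :
    ∑ i ∈ s, exp (a * x i + b * y i) ≤ (∑ i ∈ s, exp (x i)) ^ a * (∑ i ∈ s, exp (y i)) ^ b := by
  rcases s.eq_empty_or_nonempty with rfl | hs
  · simp only [Finset.sum_empty]
    positivity
  set S := ∑ i ∈ s, exp (x i)
  set T := ∑ i ∈ s, exp (y i)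
  have hS : 0 < S := Finset.sum_pos (fun i _ => exp_pos _) hs
  have hT : 0 < T := Finset.sum_pos (fun i _ => exp_pos _) hs
  rw [← div_le_one (by positivity), Finset.sum_div]
  calc ∑ i ∈ s, exp (a * x i + b * y i) / (S ^ a * T ^ b)
      = ∑ i ∈ s, (exp (x i) / S) ^ a * (exp (y i) / T) ^ b := by
        refine Finset.sum_congr rfl fun i _ => ?_
        rw [div_rpow (exp_nonneg _) hS.le, div_rpow (exp_nonneg _) hT.le, div_mul_div_comm,
          ← exp_mul, ← exp_mul, ← exp_add, mul_comm a, mul_comm b]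
    _ ≤ ∑ i ∈ s, (a * (exp (x i) / S) + b * (exp (y i) / T)) :=
        Finset.sum_le_sum fun i _ => geom_mean_le_arith_mean2_weighted ha hb
          (by positivity) (by positivity) hab
    _ = 1 := by
        rw [Finset.sum_add_distrib, ← Finset.mul_sum, ← Finset.mul_sum, ← Finset.sum_div,
          ← Finset.sum_div, div_self hS.ne', div_self hT.ne', mul_one, mul_one, hab]

theorem Real.convexOn_log_sum_exp {ι : Type*} [Fintype ι] [Nonempty ι] :
    ConvexOn ℝ Set.univ fun x : ι → ℝ => log (∑ i, exp (x i)) := by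
  refine ⟨convex_univ, fun x _ y _ a b ha hb hab => ?_⟩
  have hS : 0 < ∑ i, exp (x i) := by positivity
  have hT : 0 < ∑ i, exp (y i) := by positivity
  calc log (∑ i, exp ((a • x + b • y) i))
      ≤ log ((∑ i, exp (x i)) ^ a * (∑ i, exp (y i)) ^ b) :=
        log_le_log (by positivity) (Real.sum_exp_mul_add_mul_le_rpow_mul_rpow _ x y ha hb hab)
    _ = a • log (∑ i, exp (x i)) + b • log (∑ i, exp (y i)) := by
        rw [log_mul (by positivity) (by positivity), log_rpow hS, log_rpow hT, smul_eq_mul,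
          smul_eq_mul]

theorem ConvexOn.sum_map_mulVec_le_of_mem_doublyStochastic {n : Type*} [Fintype n]
    [DecidableEq n] {s : Set ℝ} {φ : ℝ → ℝ} (hφ : ConvexOn ℝ s φ) {M : Matrix n n ℝ}
    (hM : M ∈ doublyStochastic ℝ n) {x : n → ℝ} (hx : ∀ i, x i ∈ s) :
    ∑ i, φ ((M *ᵥ x) i) ≤ ∑ i, φ (x i) :=
  calc ∑ i, φ ((M *ᵥ x) i)
      ≤ ∑ i, ∑ j, M i j * φ (x j) := Finset.sum_le_sum fun i _ =>
        hφ.map_sum_le (fun j _ => nonneg_of_mem_doublyStochastic hM)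
          (sum_row_of_mem_doublyStochastic hM i) fun j _ => hx j
    _ = ∑ j, φ (x j) := by
        rw [Finset.sum_comm]
        simp_rw [← Finset.sum_mul, sum_col_of_mem_doublyStochastic hM, one_mul]

namespace Matrix

variable {n : Type*} [Fintype n] [DecidableEq n]

theorem normSq_mem_doublyStochastic {U : Matrix n n ℂ} (hU : U ∈ unitaryGroup n ℂ) :
    (of fun i j => Complex.normSq (U i j)) ∈ doublyStochastic ℝ n := by
  refine mem_doublyStochastic_iff_sum.2
    ⟨fun i j => Complex.normSq_nonneg _, fun i => ?_, fun j => ?_⟩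
  · have h := congrFun₂ (mem_unitaryGroup_iff.1 hU) i i
    simp only [mul_apply, star_apply, RCLike.star_def, Complex.mul_conj, one_apply_eq] at h
    exact_mod_cast h
  · have h := congrFun₂ (mem_unitaryGroup_iff'.1 hU) j j
    simp only [mul_apply, star_apply, RCLike.star_def, mul_comm _ (U _ j),
      Complex.mul_conj, one_apply_eq] at h
    exact_mod_cast h

theorem re_mul_diagonal_mul_star_apply_self (C : Matrix n n ℂ) (μ : n → ℝ) (i : n) :
    ((C * diagonal (fun j => (μ j : ℂ)) * star C) i i).re =
      ((of fun i j => Complex.normSq (C i j)) *ᵥ μ) i := by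
  simp only [mul_apply, diagonal_apply, mul_ite, mul_zero, Finset.sum_ite_eq', Finset.mem_univ,
    if_true, star_apply, RCLike.star_def, Complex.re_sum, mulVec, dotProduct, of_apply]
  refine Finset.sum_congr rfl fun j _ => ?_
  rw [mul_right_comm, Complex.mul_conj, ← Complex.ofReal_mul, Complex.ofReal_re]

theorem exp_unitary_conj (U : unitaryGroup n ℂ) (A : Matrix n n ℂ) :
    NormedSpace.exp ((U : Matrix n n ℂ) * A * star (U : Matrix n n ℂ)) =
      U * NormedSpace.exp A * star (U : Matrix n n ℂ) :=
  exp_units_conj (Unitary.toUnits U) A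

theorem IsHermitian.trace_exp {N : Matrix n n ℂ} (hN : N.IsHermitian) :
    (NormedSpace.exp N).trace = ∑ i, Complex.exp (hN.eigenvalues i) := by
  conv_lhs => rw [hN.spectral_theorem, Unitary.conjStarAlgAut_apply, exp_unitary_conj,
    trace_mul_cycle, Unitary.coe_star_mul_self, one_mul, exp_diagonal, trace_diagonal]
  simp [Complex.exp_eq_exp_ℂ]

/-- Peierls–Bogoliubov: if `N = U D U*`, the diagonal of `W* N W` is the eigenvalue vector
averaged by the doubly stochastic matrix `|(W* U)ᵢⱼ|²`, so Jensen's inequality applies. -/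
theorem IsHermitian.sum_exp_re_diag_conj_le_re_trace_exp {N : Matrix n n ℂ} (hN : N.IsHermitian)
    {W : Matrix n n ℂ} (hW : W ∈ unitaryGroup n ℂ) :
    ∑ i, Real.exp ((star W * N * W) i i).re ≤ (NormedSpace.exp N).trace.re := by
  set U : Matrix n n ℂ := (hN.eigenvectorUnitary : Matrix n n ℂ)
  have hC : star W * U ∈ unitaryGroup n ℂ :=
    mul_mem (Unitary.star_mem hW) hN.eigenvectorUnitary.2
  have hconj : star W * N * W =
      (star W * U) * diagonal (fun j => (hN.eigenvalues j : ℂ)) * star (star W * U) := by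
    conv_lhs => rw [hN.spectral_theorem, Unitary.conjStarAlgAut_apply]
    simp only [star_mul, star_star, mul_assoc]
    rfl
  calc ∑ i, Real.exp ((star W * N * W) i i).re
      = ∑ i, Real.exp
          (((of fun i j => Complex.normSq ((star W * U) i j)) *ᵥ hN.eigenvalues) i) := by
        simp_rw [hconj, re_mul_diagonal_mul_star_apply_self]
    _ ≤ ∑ i, Real.exp (hN.eigenvalues i) :=
        convexOn_exp.sum_map_mulVec_le_of_mem_doublyStochastic (normSq_mem_doublyStochastic hC)
          fun _ => trivial
    _ = (NormedSpace.exp N).trace.re := by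
        simp [hN.trace_exp, Complex.re_sum, Complex.exp_ofReal_re]

theorem convexOn_log_re_trace_exp :
    ConvexOn ℝ {N : Matrix n n ℂ | N.IsHermitian}
      fun N => Real.log (NormedSpace.exp N).trace.re := by
  have hconvex : Convex ℝ {N : Matrix n n ℂ | N.IsHermitian} := fun N hN N' hN' a b _ _ _ =>
    (IsHermitian.smul hN (IsSelfAdjoint.all a)).add (IsHermitian.smul hN' (IsSelfAdjoint.all b))
  rcases isEmpty_or_nonempty n
  · simpa [trace] using convexOn_const (0 : ℝ) hconvex
  refine ⟨hconvex, fun N hN N' hN' a b ha hb hab => ?_⟩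
  have hK : (a • N + b • N').IsHermitian := hconvex hN hN' ha hb hab
  set W : Matrix n n ℂ := (hK.eigenvectorUnitary : Matrix n n ℂ)
  set x : n → ℝ := fun i => ((star W * N * W) i i).re
  set y : n → ℝ := fun i => ((star W * N' * W) i i).re
  have heig : hK.eigenvalues = a • x + b • y := by
    funext i
    have h := congrArg Complex.re (congrFun₂ hK.conjStarAlgAut_star_eigenvectorUnitary i i)
    simpa [Unitary.conjStarAlgAut_star_apply, Matrix.mul_add, Matrix.add_mul, x, y, W] using h.symm
  calc Real.log (NormedSpace.exp (a • N + b • N')).trace.re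
      = Real.log (∑ i, Real.exp ((a • x + b • y) i)) := by
        simp_rw [hK.trace_exp, Complex.re_sum, Complex.exp_ofReal_re, heig]
    _ ≤ a • Real.log (∑ i, Real.exp (x i)) + b • Real.log (∑ i, Real.exp (y i)) :=
        Real.convexOn_log_sum_exp.2 trivial trivial ha hb hab
    _ ≤ a • Real.log (NormedSpace.exp N).trace.re
          + b • Real.log (NormedSpace.exp N').trace.re := by
        gcongr
        · exact hN.sum_exp_re_diag_conj_le_re_trace_exp hK.eigenvectorUnitary.2
        · exact hN'.sum_exp_re_diag_conj_le_re_trace_exp hK.eigenvectorUnitary.2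

end Matrix

/-- For self-adjoint `d×d` complex matrices `A₁, …, A_m`, the free energy
`p(α) = log Tr exp(∑ αᵢ Aᵢ)` is convex on `ℝ^m`. -/
theorem stmt_5 (m d : ℕ) (A : Fin m → Matrix (Fin d) (Fin d) ℂ)
    (hA : ∀ i, (A i).IsHermitian) :
    ConvexOn ℝ Set.univ
      (fun α : Fin m → ℝ =>
        Real.log (NormedSpace.exp (∑ i, (α i : ℂ) • A i)).trace.re) := by
  have hconv := convexOn_log_re_trace_exp.comp_linearMap (Fintype.linearCombination ℝ A)
  have hpre : Fintype.linearCombination ℝ A ⁻¹' {N | N.IsHermitian} = Set.univ :=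
    Set.eq_univ_of_forall fun α => isSelfAdjoint_sum _ fun i _ => (hA i).smul (IsSelfAdjoint.all _)
  rw [hpre] at hconv
  simpa [Function.comp_def, Fintype.linearCombination_apply, Complex.coe_smul] using hconv
end
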